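/- Let m = 2^l·e > 2 with l ≥ 1 and e odd, and n = 2^m − 1. The binary cyclic code C_{S,1} := C(T_{(1,m)} ∪ {0}) has length n, dimension 2^{m−1} − 2, and its minimum distance d satisfies d ≥ 2^{m/2} + 2 if l ≥ 2, and d ≥ 2^{(m−2)/2} + 2 if l = 1. -/

import Mathlib

open Polynomial

noncomputable def wt2 (a : ℕ) : ℕ := (Nat.digits 2 a).sum

noncomputable def ell (m i : ℕ) : ℕ :=
  sInf {l : ℕ | 0 < l ∧ i * 2 ^ l % (2 ^ m - 1) = i % (2 ^ m - 1)}

noncomputable def coset (m i : ℕ) : Finset ℕ :=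
  (Finset.range (ell m i)).image (fun j => i * 2 ^ j % (2 ^ m - 1))

noncomputable def rho (m i : ℕ) : ℕ := ((coset m i).filter (fun x => x % 2 = 0)).card

noncomputable def vv (m i : ℕ) : ℕ := m * rho m i / ell m i % 2

noncomputable def Tset (m j : ℕ) : Finset ℕ :=
  (Finset.range (2 ^ m - 1)).filter (fun i => vv m i = j)

noncomputable def Nset (m j : ℕ) : Finset ℕ :=
  (Finset.range (2 ^ m - 1)).filter (fun a => a ≠ 0 ∧ wt2 a % 2 = j)

noncomputable def epsilon (h a : ℕ) : ℕ :=
  if a = 2 ^ h - 1 then 1 else sInf {t : ℕ | 2 ^ h - 1 ≤ 2 ^ t * a}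

noncomputable def kappa (h a : ℕ) : ℕ := epsilon h a % 2

noncomputable def leader (m i : ℕ) : ℕ := sInf {x : ℕ | x ∈ coset m i}

noncomputable def uu (m h i : ℕ) : ℕ :=
  if leader m i = 1 then (vv m 1 + h + 1) % 2
  else if leader m i % 2 = 1 ∧ leader m i ≤ 2 ^ h - 1 then
    (kappa h (leader m i) + vv m (leader m i)) % 2
  else vv m (leader m i)

noncomputable def Dset (m h j : ℕ) : Finset ℕ :=
  (Finset.range (2 ^ m - 1)).filter (fun i => uu m h i = j)

noncomputable def cyclicCode (m : ℕ) (α : GaloisField 2 m) (T : Set ℕ) :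
    Submodule (ZMod 2) (Polynomial (ZMod 2)) :=
  Polynomial.degreeLT (ZMod 2) (2 ^ m - 1) ⊓
    ⨅ j ∈ T, LinearMap.ker (Polynomial.aeval (α ^ j)).toLinearMap

def minDistGE (C : Submodule (ZMod 2) (Polynomial (ZMod 2))) (d : ℕ) : Prop :=
  ∀ c ∈ C, c ≠ 0 → d ≤ c.support.card

/-!
For `i < n` the numbers `i * 2 ^ j % n` are the cyclic rotations of the `m`-bit expansion of `i`;
as `j` runs over `[0, m)` they run `m / l_i` times through `C_i`, and their parities are the bits
of `i`. Hence `m * ρ_i / l_i` is the number of zero bits of `i`, and for even `m` the set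
`T_(1,m)` consists of the `2 ^ (m - 1)` nonzero `i < n` of odd binary weight. This set is closed
under doubling modulo `n`, so the code has a generator polynomial of degree `2 ^ (m - 1) + 1`.

For the distance take an odd `h` coprime to `m` with `2 * h < m` and `β = α ^ (2 ^ h - 1)`, again
of order `n`. For `0 < u ≤ 2 ^ h` both `u * (2 ^ h - 1)` (weight `h`) and its complement
`n - u * (2 ^ h - 1)` (weight `m - h`) have odd weight, so `β ^ k` is a zero of every codeword for
`|k| ≤ 2 ^ h`. These `2 ^ (h + 1) + 1` consecutive powers give the BCH bound
`d ≥ 2 ^ (h + 1) + 2`; take `h = m / 2 - 1` if `4 ∣ m` and `h = m / 2 - 2` otherwise.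
-/

section BinaryWeight

lemma wt2_zero : wt2 0 = 0 := by simp [wt2]

lemma wt2_eq_mod_two_add_wt2_div_two (a : ℕ) : wt2 a = a % 2 + wt2 (a / 2) := by
  rcases Nat.eq_zero_or_pos a with rfl | ha
  · simp [wt2_zero]
  · simp [wt2, Nat.digits_def' one_lt_two ha]

lemma wt2_add_two_pow_mul {u : ℕ} (v : ℕ) {h : ℕ} (hu : u < 2 ^ h) :
    wt2 (u + 2 ^ h * v) = wt2 u + wt2 v := by
  induction h generalizing u with
  | zero => simp_all [wt2_zero]
  | succ h ih =>
    have double : 2 ^ (h + 1) * v = 2 * (2 ^ h * v) := by ring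
    rw [pow_succ] at hu
    rw [wt2_eq_mod_two_add_wt2_div_two, wt2_eq_mod_two_add_wt2_div_two u, add_assoc,
      ← ih (u := u / 2) (by omega), double,
      show (u + 2 * (2 ^ h * v)) / 2 = u / 2 + 2 ^ h * v by omega]
    omega

lemma wt2_two_pow_sub_one (h : ℕ) : wt2 (2 ^ h - 1) = h := by
  induction h with
  | zero => simp [wt2_zero]
  | succ h ih =>
    rw [wt2_eq_mod_two_add_wt2_div_two, pow_succ]
    have : 1 ≤ 2 ^ h := Nat.one_le_two_pow
    rw [show (2 ^ h * 2 - 1) / 2 = 2 ^ h - 1 by omega, ih]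
    omega

lemma wt2_add_wt2_two_pow_sub_one_sub {h a : ℕ} (ha : a < 2 ^ h) :
    wt2 a + wt2 (2 ^ h - 1 - a) = h := by
  induction h generalizing a with
  | zero => simp_all [wt2_zero]
  | succ h ih =>
    rw [pow_succ] at ha ⊢
    rw [wt2_eq_mod_two_add_wt2_div_two a, wt2_eq_mod_two_add_wt2_div_two (_ - a),
      show (2 ^ h * 2 - 1 - a) / 2 = 2 ^ h - 1 - a / 2 by omega]
    have := ih (a := a / 2) (by omega)
    omega

lemma wt2_le {h a : ℕ} (ha : a < 2 ^ h) : wt2 a ≤ h :=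
  (wt2_add_wt2_two_pow_sub_one_sub ha).le.trans' (Nat.le_add_right _ _)

lemma wt2_mul_two_pow_sub_one {h u : ℕ} (hu0 : 0 < u) (hu : u ≤ 2 ^ h) :
    wt2 (u * (2 ^ h - 1)) = h := by
  have split : u * (2 ^ h - 1) = (2 ^ h - u) + 2 ^ h * (u - 1) := by
    zify [hu0, hu, Nat.one_le_two_pow]
    ring
  have compl := wt2_add_wt2_two_pow_sub_one_sub (h := h) (a := u - 1) (by omega)
  rw [show 2 ^ h - 1 - (u - 1) = 2 ^ h - u by omega] at compl
  rw [split, wt2_add_two_pow_mul _ (by omega)]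
  omega

lemma wt2_eq_sum_range {h a : ℕ} (ha : a < 2 ^ h) :
    wt2 a = ∑ k ∈ Finset.range h, a / 2 ^ k % 2 := by
  induction h generalizing a with
  | zero => simp_all [wt2_zero]
  | succ h ih =>
    rw [Finset.sum_range_succ', wt2_eq_mod_two_add_wt2_div_two, ih (by rw [pow_succ] at ha; omega)]
    simp [pow_succ', Nat.div_div_eq_div_mul, add_comm]

end BinaryWeight

section Rotation

variable {m i : ℕ}

lemma mul_two_pow_mod_two_pow_sub_one {j : ℕ} (hi : i < 2 ^ m - 1) (hj : j ≤ m) :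
    i * 2 ^ j % (2 ^ m - 1) = i / 2 ^ (m - j) + 2 ^ j * (i % 2 ^ (m - j)) := by
  set A := 2 ^ j
  set B := 2 ^ (m - j)
  have hAB : (2 : ℤ) ^ m = A * B := by push_cast [A, B, ← pow_add]; congr 1; omega
  set q := i / B
  set r := i % B
  have hqr : r + B * q = i := Nat.mod_add_div i B
  have hq : q < A := Nat.div_lt_of_lt_mul (by zify [Nat.one_le_two_pow] at hi; linarith)
  have hr : r < B := Nat.mod_lt _ (by positivity)
  have lt : q + A * r < 2 ^ m - 1 := by
    zify [Nat.one_le_two_pow] at hi ⊢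
    rw [hAB, ← hqr] at hi
    rw [hAB]
    push_cast at hi
    nlinarith
  have split : i * A = (q + A * r) + q * (2 ^ m - 1) := by
    zify [Nat.one_le_two_pow]
    rw [hAB, ← hqr]
    push_cast
    ring
  rw [split, Nat.add_mul_mod_self_right, Nat.mod_eq_of_lt lt]

lemma div_two_pow_sub_lt (hi : i < 2 ^ m - 1) {j : ℕ} (hj : j ≤ m) : i / 2 ^ (m - j) < 2 ^ j :=
  Nat.div_lt_of_lt_mul <| by rw [← pow_add, Nat.sub_add_cancel hj]; omega

lemma wt2_mul_two_pow_mod (hi : i < 2 ^ m - 1) {j : ℕ} (hj : j ≤ m) :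
    wt2 (i * 2 ^ j % (2 ^ m - 1)) = wt2 i := by
  conv_rhs => rw [← Nat.mod_add_div i (2 ^ (m - j))]
  rw [mul_two_pow_mod_two_pow_sub_one hi hj, wt2_add_two_pow_mul _ (div_two_pow_sub_lt hi hj),
    wt2_add_two_pow_mul _ (Nat.mod_lt _ (by positivity)), add_comm]

lemma mul_two_pow_mod_mod_two (hi : i < 2 ^ m - 1) {j : ℕ} (hj0 : 0 < j) (hj : j ≤ m) :
    i * 2 ^ j % (2 ^ m - 1) % 2 = i / 2 ^ (m - j) % 2 := by
  obtain ⟨k, rfl⟩ := Nat.exists_eq_succ_of_ne_zero hj0.ne'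
  rw [mul_two_pow_mod_two_pow_sub_one hi hj, pow_succ', mul_assoc, Nat.add_mul_mod_self_left]

lemma iterate_mul_two_mod (hi : i < 2 ^ m - 1) (j : ℕ) :
    (fun x => x * 2 % (2 ^ m - 1))^[j] i = i * 2 ^ j % (2 ^ m - 1) := by
  induction j with
  | zero => simp [Nat.mod_eq_of_lt hi]
  | succ j ih => rw [Function.iterate_succ_apply', ih, Nat.mod_mul_mod, pow_succ, mul_assoc]

lemma isPeriodicPt_mul_two_mod (hi : i < 2 ^ m - 1) :
    Function.IsPeriodicPt (fun x => x * 2 % (2 ^ m - 1)) m i := by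
  simp [Function.IsPeriodicPt, Function.IsFixedPt, iterate_mul_two_mod hi,
    mul_two_pow_mod_two_pow_sub_one hi le_rfl, Nat.mod_one]

lemma ell_eq_minimalPeriod (hi : i < 2 ^ m - 1) :
    ell m i = Function.minimalPeriod (fun x => x * 2 % (2 ^ m - 1)) i := by
  rw [ell, Function.minimalPeriod_eq_sInf_n_pos_IsPeriodicPt]
  simp [Function.IsPeriodicPt, Function.IsFixedPt, iterate_mul_two_mod hi, Nat.mod_eq_of_lt hi]

end Rotation

lemma Nat.count_mul_of_periodic {p : ℕ → Prop} [DecidablePred p] {L : ℕ}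
    (hp : Function.Periodic p L) (q : ℕ) : Nat.count p (q * L) = q * Nat.count p L := by
  induction q with
  | zero => simp
  | succ q ih =>
    rw [add_mul, one_mul, Nat.count_add, ih, add_mul, one_mul]
    congr 2
    ext k
    exact iff_of_eq (by simpa [add_comm] using hp.nat_mul q k)

section Orbit

variable {m i : ℕ}

lemma count_mul_two_pow_mod_even (hi : i < 2 ^ m - 1) :
    Nat.count (fun j => i * 2 ^ j % (2 ^ m - 1) % 2 = 0) m = m - wt2 i := by
  set g := fun j => i * 2 ^ j % (2 ^ m - 1) % 2
  have odd_count : ∑ j ∈ Finset.range m, g j = wt2 i := by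
    -- `mul_two_pow_mod_mod_two` needs `1 ≤ j ≤ m`, so shift the range using `g m = g 0`
    have shift : ∑ j ∈ Finset.range m, g j = ∑ j ∈ Finset.range m, g (j + 1) := by
      have hgm : g m = g 0 := by
        simp [g, mul_two_pow_mod_two_pow_sub_one hi le_rfl, Nat.mod_eq_of_lt hi, Nat.mod_one]
      have := Finset.sum_range_succ g m
      rw [Finset.sum_range_succ', hgm] at this
      omega
    rw [shift, wt2_eq_sum_range (h := m) (by omega), ← Finset.sum_range_reflect]
    refine Finset.sum_congr rfl fun j hj => ?_
    rw [Finset.mem_range] at hj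
    simp only [g]
    rw [mul_two_pow_mod_mod_two hi (Nat.succ_pos _) (by omega)]
    congr 3
    omega
  have total : Nat.count (fun j => g j = 0) m + ∑ j ∈ Finset.range m, g j = m := by
    rw [Nat.count_eq_card_filter_range, Finset.card_filter, ← Finset.sum_add_distrib]
    have : ∀ j, (if g j = 0 then 1 else 0) + g j = 1 := fun j => by
      have : g j < 2 := Nat.mod_lt _ two_pos
      split_ifs <;> omega
    simp [this]
  simp only [g] at total odd_count
  omega

lemma rho_eq_count (hi : i < 2 ^ m - 1) :
    rho m i = Nat.count (fun j => i * 2 ^ j % (2 ^ m - 1) % 2 = 0) (ell m i) := by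
  rw [rho, coset, Finset.filter_image, Finset.card_image_of_injOn,
    Nat.count_eq_card_filter_range]
  intro a ha b hb hab
  simp only [Finset.coe_filter, Finset.mem_range, Set.mem_ofPred_eq] at ha hb
  rw [ell_eq_minimalPeriod hi] at ha hb
  refine Function.iterate_injOn_Iio_minimalPeriod ha.1 hb.1 ?_
  simpa [iterate_mul_two_mod hi] using hab

theorem mul_rho_div_ell (hi : i < 2 ^ m - 1) : m * rho m i / ell m i = m - wt2 i := by
  have hm : 0 < m := Nat.pos_of_ne_zero (by rintro rfl; simp at hi)
  have hL := ell_eq_minimalPeriod hi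
  have hpos : 0 < ell m i := hL ▸ (isPeriodicPt_mul_two_mod hi).minimalPeriod_pos hm
  obtain ⟨q, hq⟩ : ell m i ∣ m := hL ▸ (isPeriodicPt_mul_two_mod hi).minimalPeriod_dvd
  have periodic : Function.Periodic (fun j => i * 2 ^ j % (2 ^ m - 1) % 2 = 0) (ell m i) :=
    fun j => by simp only [← iterate_mul_two_mod hi, hL, Function.iterate_add_minimalPeriod_eq]
  calc m * rho m i / ell m i = q * rho m i :=
        Nat.div_eq_of_eq_mul_left hpos (by nth_rw 1 [hq]; ring)
    _ = Nat.count (fun j => i * 2 ^ j % (2 ^ m - 1) % 2 = 0) (q * ell m i) := by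
        rw [Nat.count_mul_of_periodic periodic, rho_eq_count hi]
    _ = m - wt2 i := by rw [mul_comm, ← hq, count_mul_two_pow_mod_even hi]

end Orbit

section OddWeight

variable {m : ℕ}

lemma mem_Nset_one {x : ℕ} : x ∈ Nset m 1 ↔ x < 2 ^ m - 1 ∧ wt2 x % 2 = 1 := by
  simp only [Nset, Finset.mem_filter, Finset.mem_range]
  refine and_congr_right fun _ => and_iff_right_of_imp ?_
  rintro h rfl
  simp [wt2_zero] at h

lemma Tset_one_eq_Nset_one (hm : Even m) : Tset m 1 = Nset m 1 := by
  ext i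
  rw [mem_Nset_one, Tset, Finset.mem_filter, Finset.mem_range]
  refine and_congr_right fun hi => ?_
  have := wt2_le (h := m) (a := i) (by omega)
  obtain ⟨k, rfl⟩ := hm
  rw [vv, mul_rho_div_ell hi]
  omega

lemma count_wt2_odd (m : ℕ) : Nat.count (fun i => wt2 i % 2 = 1) (2 ^ (m + 1)) = 2 ^ m := by
  have upper_half : Nat.count (fun k => wt2 (2 ^ m + k) % 2 = 1) (2 ^ m) =
      Nat.count (fun k => ¬ wt2 k % 2 = 1) (2 ^ m) := by
    simp only [Nat.count_eq_card_filter_range]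
    congr 1
    refine Finset.filter_congr fun k hk => ?_
    have := wt2_add_two_pow_mul 1 (Finset.mem_range.1 hk)
    rw [mul_one, wt2_eq_mod_two_add_wt2_div_two 1] at this
    rw [add_comm, this]
    simp [wt2_zero]
    omega
  rw [pow_succ, mul_two, Nat.count_add, upper_half, Nat.count_eq_card_filter_range,
    Nat.count_eq_card_filter_range, Finset.card_filter_add_card_filter_not, Finset.card_range]

lemma card_Nset_one (hm : Even m) (hm0 : 0 < m) : (Nset m 1).card = 2 ^ (m - 1) := by
  have hN : Nset m 1 = (Finset.range (2 ^ m - 1)).filter (fun i => wt2 i % 2 = 1) := by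
    ext x
    rw [mem_Nset_one, Finset.mem_filter, Finset.mem_range]
  have hcount := count_wt2_odd (m - 1)
  rw [Nat.sub_add_cancel hm0, ← Nat.sub_add_cancel (Nat.one_le_two_pow (n := m)), Nat.count_succ,
    wt2_two_pow_sub_one, if_neg (by obtain ⟨k, rfl⟩ := hm; omega)] at hcount
  rw [hN, ← Nat.count_eq_card_filter_range, ← hcount, add_zero]

lemma mul_two_mod_mem_Nset_one {x : ℕ} (hx : x ∈ Nset m 1) : x * 2 % (2 ^ m - 1) ∈ Nset m 1 := by
  rw [mem_Nset_one] at hx ⊢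
  have hm : 1 ≤ m := Nat.pos_of_ne_zero (by rintro rfl; simp at hx)
  refine ⟨Nat.mod_lt _ (by omega), ?_⟩
  have := wt2_mul_two_pow_mod hx.1 hm
  rw [pow_one] at this
  rw [this, hx.2]

lemma two_pow_sub_one_sub_mem_Nset_one (hm : Even m) {x : ℕ} (hx : x ∈ Nset m 1) :
    2 ^ m - 1 - x ∈ Nset m 1 := by
  rw [mem_Nset_one] at hx ⊢
  have hwt := wt2_add_wt2_two_pow_sub_one_sub (h := m) (a := x) (by omega)
  have hx0 : x ≠ 0 := by rintro rfl; simp [wt2_zero] at hx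
  obtain ⟨k, rfl⟩ := hm
  omega

lemma mul_two_pow_sub_one_mem_Nset_one {h u : ℕ} (hh : Odd h) (h2h : 2 * h < m) (hu0 : 0 < u)
    (hu : u ≤ 2 ^ h) : u * (2 ^ h - 1) ∈ Nset m 1 := by
  rw [mem_Nset_one, wt2_mul_two_pow_sub_one hu0 hu, Nat.odd_iff.1 hh]
  have hlt : u * (2 ^ h - 1) < 2 ^ h * 2 ^ h :=
    Nat.mul_lt_mul_of_le_of_lt hu (Nat.sub_lt (by positivity) one_pos) (by positivity)
  have hle : 2 ^ h * 2 ^ h * 2 ≤ 2 ^ m := by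
    rw [← pow_add, ← pow_succ]
    exact Nat.pow_le_pow_right two_pos (by omega)
  have : 0 < 2 ^ h * 2 ^ h := by positivity
  omega

end OddWeight

section GeneratorPolynomial

lemma finrank_degreeLT_inf_span {K : Type*} [Field K] {g : K[X]} (hg : g ≠ 0) (n : ℕ) :
    Module.finrank K ↥(degreeLT K n ⊓ (Ideal.span {g}).restrictScalars K) = n - g.natDegree := by
  have hdeg : ∀ q : K[X], g * q ∈ degreeLT K n ↔ q ∈ degreeLT K (n - g.natDegree) := by
    intro q
    rcases eq_or_ne q 0 with rfl | hq
    · simp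
    rw [mem_degreeLT, mem_degreeLT, degree_mul, degree_eq_natDegree hg, degree_eq_natDegree hq]
    norm_cast
    omega
  have hmap : degreeLT K n ⊓ (Ideal.span {g}).restrictScalars K =
      (degreeLT K (n - g.natDegree)).map (LinearMap.mulLeft K g) := by
    ext c
    simp only [Submodule.mem_inf, Submodule.restrictScalars_mem, Ideal.mem_span_singleton,
      Submodule.mem_map, LinearMap.mulLeft_apply]
    constructor
    · rintro ⟨hc, q, rfl⟩
      exact ⟨q, (hdeg q).1 hc, rfl⟩
    · rintro ⟨q, hq, rfl⟩
      exact ⟨(hdeg q).2 hq, dvd_mul_right g q⟩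
  rw [hmap, ← (Submodule.equivMapOfInjective _ (mul_right_injective₀ hg) _).finrank_eq,
    (degreeLTEquiv K _).finrank_eq, Module.finrank_fin_fun]

lemma Finset.prod_X_sub_C_dvd_iff {F : Type*} [Field F] (S : Finset F) (p : F[X]) :
    ∏ x ∈ S, (X - C x) ∣ p ↔ ∀ x ∈ S, p.IsRoot x := by
  rcases eq_or_ne p 0 with rfl | hp
  · simp
  rw [Finset.prod_eq_multiset_prod, Multiset.prod_X_sub_C_dvd_iff_le_roots hp,
    Multiset.le_iff_subset S.nodup]
  simp [Multiset.subset_iff, hp]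

lemma exists_map_eq_prod_X_sub_C {F : Type*} [Field F] [Algebra (ZMod 2) F] (S : Finset F)
    (hS : ∀ x ∈ S, x ^ 2 ∈ S) :
    ∃ g : (ZMod 2)[X], g.Monic ∧ g.map (algebraMap (ZMod 2) F) = ∏ x ∈ S, (X - C x) := by
  classical
  have : CharP F 2 := charP_of_injective_algebraMap (algebraMap (ZMod 2) F).injective 2
  have hsq : S.image (frobenius F 2) = S :=
    Finset.eq_of_subset_of_card_le (Finset.image_subset_iff.2 hS)
      (Finset.card_image_of_injective _ (frobenius_inj F 2)).ge
  have hfixed : (∏ x ∈ S, (X - C x)).map (frobenius F 2) = ∏ x ∈ S, (X - C x) := by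
    conv_rhs => rw [← hsq, Finset.prod_image fun x _ y _ h => frobenius_inj F 2 h]
    simp [Polynomial.map_prod]
  have hcoeff : ∀ k, (∏ x ∈ S, (X - C x)).coeff k ∈ Set.range (algebraMap (ZMod 2) F) := by
    intro k
    have hk := congrArg (coeff · k) hfixed
    simp only [coeff_map, frobenius_def] at hk
    have hidem : IsIdempotentElem ((∏ x ∈ S, (X - C x)).coeff k) := by
      rwa [IsIdempotentElem, ← sq]
    rcases IsIdempotentElem.iff_eq_zero_or_one.1 hidem with h0 | h1
    · exact ⟨0, by rw [map_zero, h0]⟩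
    · exact ⟨1, by rw [map_one, h1]⟩
  obtain ⟨g, hg, -, hmonic⟩ := lifts_and_degree_eq_and_monic
    ((lifts_iff_coeff_lifts _).2 hcoeff) (monic_prod_of_monic _ _ fun x _ => monic_X_sub_C x)
  exact ⟨g, hmonic, hg⟩

end GeneratorPolynomial

section CyclicCode

variable {m : ℕ} {α : GaloisField 2 m}

lemma mem_cyclicCode {T : Set ℕ} {c : (ZMod 2)[X]} :
    c ∈ cyclicCode m α T ↔
      c ∈ degreeLT (ZMod 2) (2 ^ m - 1) ∧ ∀ j ∈ T, aeval (α ^ j) c = 0 := by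
  simp [cyclicCode, Submodule.mem_iInf]

lemma cyclicCode_eq_degreeLT_inf_span (hα : orderOf α = 2 ^ m - 1) {T : Finset ℕ}
    (hT : ∀ j ∈ T, j < 2 ^ m - 1) (hT2 : ∀ j ∈ T, j * 2 % (2 ^ m - 1) ∈ T) :
    ∃ g : (ZMod 2)[X], g ≠ 0 ∧ g.natDegree = T.card ∧
      cyclicCode m α ↑T = degreeLT (ZMod 2) (2 ^ m - 1) ⊓ (Ideal.span {g}).restrictScalars _ := by
  classical
  set S := T.image (α ^ ·)
  have hinj : Set.InjOn (α ^ ·) T := pow_injOn_Iio_orderOf.mono fun j hj => by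
    rw [Set.mem_Iio, hα]; exact hT j hj
  have hS : ∀ x ∈ S, x ^ 2 ∈ S := by
    simp only [S, Finset.mem_image, forall_exists_index, and_imp, forall_apply_eq_imp_iff₂]
    exact fun j hj => ⟨j * 2 % (2 ^ m - 1), hT2 j hj, by rw [← hα, pow_mod_orderOf, pow_mul]⟩
  obtain ⟨g, hmonic, hg⟩ := exists_map_eq_prod_X_sub_C S hS
  refine ⟨g, hmonic.ne_zero, ?_, ?_⟩
  · rw [← natDegree_map (algebraMap (ZMod 2) (GaloisField 2 m)), hg, natDegree_prod_of_monic _ _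
      fun x _ => monic_X_sub_C x]
    simp [S, Finset.card_image_of_injOn hinj]
  · ext c
    rw [mem_cyclicCode, Submodule.mem_inf, Submodule.restrictScalars_mem,
      Ideal.mem_span_singleton, ← map_dvd_map' (algebraMap (ZMod 2) (GaloisField 2 m)), hg,
      Finset.prod_X_sub_C_dvd_iff]
    simp [S, eval_map_algebraMap]

theorem finrank_cyclicCode (hα : orderOf α = 2 ^ m - 1) {T : Finset ℕ}
    (hT : ∀ j ∈ T, j < 2 ^ m - 1) (hT2 : ∀ j ∈ T, j * 2 % (2 ^ m - 1) ∈ T) :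
    Module.finrank (ZMod 2) ↥(cyclicCode m α ↑T) = 2 ^ m - 1 - T.card := by
  obtain ⟨g, hg0, hdeg, hcode⟩ := cyclicCode_eq_degreeLT_inf_span hα hT hT2
  rw [hcode, finrank_degreeLT_inf_span hg0, hdeg]

end CyclicCode

section BCHBound

theorem card_support_ge_of_aeval_geom_eq_zero {K F : Type*} [Field K] [Field F] [Algebra K F]
    {c : K[X]} (hc : c ≠ 0) {β γ : F} (hγ : γ ≠ 0) (hβ : c.natDegree < orderOf β) {D : ℕ}
    (hroots : ∀ j ≤ D, aeval (γ * β ^ j) c = 0) : D + 2 ≤ c.support.card := by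
  by_contra! hsmall
  set e := c.support.equivFin.symm
  have he : ∀ t, (e t : ℕ) < orderOf β := fun t =>
    (le_natDegree_of_mem_supp _ (e t).2).trans_lt hβ
  have hf : Function.Injective fun t => β ^ (e t : ℕ) := fun s t hst =>
    e.injective (Subtype.ext (pow_injOn_Iio_orderOf (he s) (he t) hst))
  have hv := Matrix.eq_zero_of_forall_pow_sum_mul_pow_eq_zero hf
    (v := fun t => algebraMap K F (c.coeff (e t)) * γ ^ (e t : ℕ)) fun j => by
      rw [← hroots j (by omega), aeval_def, eval₂_eq_sum, Polynomial.sum_def,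
        ← Finset.sum_coe_sort c.support, ← e.sum_comp]
      refine Finset.sum_congr rfl fun t _ => ?_
      ring
  obtain ⟨k, hk⟩ := Polynomial.support_nonempty.2 hc
  have := congrFun hv (e.symm ⟨k, hk⟩)
  simp only [Equiv.apply_symm_apply, Pi.zero_apply, mul_eq_zero, pow_eq_zero_iff', hγ,
    false_and, or_false, map_eq_zero] at this
  exact mem_support_iff.1 hk this

end BCHBound

section OddWeightCode

variable {m : ℕ} {α : GaloisField 2 m}

theorem finrank_cyclicCode_insert_zero_Nset_one (hm : Even m) (hm0 : 0 < m)
    (hα : orderOf α = 2 ^ m - 1) :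
    Module.finrank (ZMod 2) ↥(cyclicCode m α ↑(insert 0 (Nset m 1))) = 2 ^ (m - 1) - 2 := by
  have hpow : 2 ^ m = 2 * 2 ^ (m - 1) := by rw [← pow_succ', Nat.sub_add_cancel hm0]
  have hpos : 1 ≤ 2 ^ (m - 1) := Nat.one_le_two_pow
  have hlt : ∀ j ∈ insert 0 (Nset m 1), j < 2 ^ m - 1 := by
    intro j hj
    rcases Finset.mem_insert.1 hj with rfl | hj
    · omega
    · exact (mem_Nset_one.1 hj).1
  have hclosed : ∀ j ∈ insert 0 (Nset m 1), j * 2 % (2 ^ m - 1) ∈ insert 0 (Nset m 1) := by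
    intro j hj
    rcases Finset.mem_insert.1 hj with rfl | hj
    · simp
    · exact Finset.mem_insert_of_mem (mul_two_mod_mem_Nset_one hj)
  have h0 : 0 ∉ Nset m 1 := by simp [mem_Nset_one, wt2_zero]
  rw [finrank_cyclicCode hα hlt hclosed, Finset.card_insert_of_notMem h0, card_Nset_one hm hm0]
  omega

theorem minDistGE_cyclicCode_insert_zero_Nset_one {h : ℕ} (hm : Even m) (hh : Odd h)
    (h2h : 2 * h < m) (hcop : Nat.Coprime h m) (hα : orderOf α = 2 ^ m - 1) :
    minDistGE (cyclicCode m α ↑(insert 0 (Nset m 1))) (2 ^ (h + 1) + 2) := by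
  intro c hc hc0
  obtain ⟨hdeg, hroots⟩ := mem_cyclicCode.1 hc
  have hn : 0 < 2 ^ m - 1 := Nat.sub_pos_of_lt (Nat.one_lt_two_pow (by omega))
  have hα0 : α ≠ 0 := by
    rintro rfl
    simpa [hα, zero_pow hn.ne'] using pow_orderOf_eq_one (0 : GaloisField 2 m)
  have hα_inv : ∀ x ≤ 2 ^ m - 1, α ^ (2 ^ m - 1 - x) = (α ^ x)⁻¹ := fun x hx => by
    rw [pow_sub₀ _ hα0 hx, ← hα, pow_orderOf_eq_one, one_mul]
  set β := α ^ (2 ^ h - 1)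
  have hβ0 : β ≠ 0 := pow_ne_zero _ hα0
  have hcop' : (orderOf α).Coprime (2 ^ h - 1) := by
    rw [hα, Nat.Coprime, Nat.pow_sub_one_gcd_pow_sub_one, Nat.gcd_comm, hcop, pow_one]
  have hβ : orderOf β = 2 ^ m - 1 := hcop'.orderOf_pow.trans hα
  have hsymm : ∀ u ≤ 2 ^ h, aeval (β ^ u) c = 0 ∧ aeval (β ^ u)⁻¹ c = 0 := by
    intro u hu
    rcases Nat.eq_zero_or_pos u with rfl | hu0
    · simpa using hroots 0 (by simp)
    have hmem := mul_two_pow_sub_one_mem_Nset_one hh h2h hu0 hu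
    have hβu : β ^ u = α ^ (u * (2 ^ h - 1)) := by rw [← pow_mul, mul_comm]
    rw [hβu, ← hα_inv _ (mem_Nset_one.1 hmem).1.le]
    exact ⟨hroots _ (by simp [hmem]),
      hroots _ (by simp [two_pow_sub_one_sub_mem_Nset_one hm hmem])⟩
  -- the zeros `β ^ k`, `-2 ^ h ≤ k ≤ 2 ^ h`, are `(β ^ 2 ^ h)⁻¹ * β ^ j` for `j ≤ 2 ^ (h + 1)`
  refine card_support_ge_of_aeval_geom_eq_zero hc0 (β := β)
    (inv_ne_zero (pow_ne_zero (2 ^ h) hβ0)) ?_ fun j hj => ?_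
  · rw [hβ, natDegree_lt_iff_degree_lt hc0]
    exact mem_degreeLT.1 hdeg
  rcases le_total j (2 ^ h) with hj' | hj'
  · rw [← pow_sub_mul_pow β hj', mul_inv, inv_mul_cancel_right₀ (pow_ne_zero _ hβ0)]
    exact (hsymm _ (Nat.sub_le _ _)).2
  · rw [← pow_sub_mul_pow β hj', mul_comm (β ^ (j - 2 ^ h)), inv_mul_cancel_left₀
      (pow_ne_zero _ hβ0)]
    exact (hsymm _ (by rw [pow_succ] at hj; omega)).1

end OddWeightCode

theorem stmt9 (m l e : ℕ) (hl : 1 ≤ l) (he : Odd e) (hm : m = 2 ^ l * e) (hm2 : 2 < m)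
    (α : GaloisField 2 m) (hα : orderOf α = 2 ^ m - 1) :
    Module.finrank (ZMod 2) ↥(cyclicCode m α (insert 0 (↑(Tset m 1) : Set ℕ))) =
      2 ^ (m - 1) - 2 ∧
    (2 ≤ l → minDistGE (cyclicCode m α (insert 0 (↑(Tset m 1) : Set ℕ)))
      (2 ^ (m / 2) + 2)) ∧
    (l = 1 → minDistGE (cyclicCode m α (insert 0 (↑(Tset m 1) : Set ℕ)))
      (2 ^ ((m - 2) / 2) + 2)) := by
  have hm_even : Even m := hm ▸ (Nat.even_pow.2 ⟨even_two, by omega⟩).mul_right e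
  rw [← Finset.coe_insert, Tset_one_eq_Nset_one hm_even]
  refine ⟨finrank_cyclicCode_insert_zero_Nset_one hm_even (by omega) hα, fun hl2 => ?_,
    fun hl1 => ?_⟩
  · obtain ⟨k, hk⟩ : 4 ∣ m := hm ▸ (pow_dvd_pow 2 hl2).mul_right e
    have hodd : Odd (2 * k - 1) := ⟨k - 1, by omega⟩
    have hcop : Nat.Coprime (2 * k - 1) m := by
      rw [show m = 2 * (2 * k - 1 + 1) by omega]
      exact (Nat.coprime_two_right.2 hodd).mul_right
        (Nat.coprime_self_add_right.2 (Nat.coprime_one_right _))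
    rw [show m / 2 = 2 * k - 1 + 1 by omega]
    exact minDistGE_cyclicCode_insert_zero_Nset_one hm_even hodd (by omega) hcop hα
  · obtain ⟨k, rfl⟩ := he
    rw [hl1, pow_one] at hm
    have hodd : Odd (2 * k - 1) := ⟨k - 1, by omega⟩
    have hcop : Nat.Coprime (2 * k - 1) m := by
      rw [show m = 2 * (2 * k - 1 + 2) by omega]
      exact (Nat.coprime_two_right.2 hodd).mul_right
        (Nat.coprime_self_add_right.2 (Nat.coprime_two_right.2 hodd))
    rw [show (m - 2) / 2 = 2 * k - 1 + 1 by omega]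
    exact minDistGE_cyclicCode_insert_zero_Nset_one hm_even hodd (by omega) hcop hα
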